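/- Let R be a Poisson algebra over an arbitrary field K. Then γ_m(R)·γ_n(R) ⊆ γ_{m+n-2}(R)·R for all m, n ≥ 2. -/
import Mathlib


/-- A Poisson algebra structure on a commutative `K`-algebra `R`:
a `K`-bilinear bracket which is antisymmetric, satisfies the Jacobi identity
and the Leibniz rule. -/
structure PoissonStr (K R : Type*) [Field K] [CommRing R] [Algebra K R] where
  bracket : R →ₗ[K] R →ₗ[K] R
  antisymm : ∀ a b : R, bracket a b = - bracket b a
  jacobi : ∀ a b c : R,
    bracket (bracket a b) c + bracket (bracket b c) a + bracket (bracket c a) b = 0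
  leibniz : ∀ a b c : R, bracket (a * b) c = a * bracket b c + b * bracket a c

namespace PoissonStr

variable {K R : Type*} [Field K] [CommRing R] [Algebra K R]

/-- The span `{M, N}` of brackets of elements of two subspaces. -/
def sBr (P : PoissonStr K R) (M N : Submodule K R) : Submodule K R :=
  Submodule.span K {z : R | ∃ m ∈ M, ∃ n ∈ N, z = P.bracket m n}

/-- Upper Lie powers: `R^(0) = R`, `R^(n+1) = {R^(n), R}·R`. -/
def upper (P : PoissonStr K R) : ℕ → Submodule K R
  | 0 => ⊤
  | n + 1 => P.sBr (upper P n) ⊤ * ⊤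

/-- Lower central series of `R` as a Lie algebra: `γ_1 = R`,
`γ_{n+1} = {γ_n, R}` (with the convention `γ_0 = R`). -/
def gamma (P : PoissonStr K R) : ℕ → Submodule K R
  | 0 => ⊤
  | 1 => ⊤
  | n + 2 => P.sBr (gamma P (n + 1)) ⊤

/-- Derived series of `R` as a Lie algebra. -/
def derived (P : PoissonStr K R) : ℕ → Submodule K R
  | 0 => ⊤
  | n + 1 => P.sBr (derived P n) (derived P n)

/-- Upper derived series: `δ̃_0 = R`, `δ̃_{n+1} = {δ̃_n, δ̃_n}·R`. -/
def uderived (P : PoissonStr K R) : ℕ → Submodule K R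
  | 0 => ⊤
  | n + 1 => P.sBr (uderived P n) (uderived P n) * ⊤

end PoissonStr

namespace PoissonStr

variable {K R : Type*} [Field K] [CommRing R] [Algebra K R] (P : PoissonStr K R)

/-! ### Elementary bracket identities -/

lemma bracket_zero_left (y : R) : P.bracket (0 : R) y = 0 := by
  rw [map_zero]; rfl

lemma bracket_add_left (a b y : R) :
    P.bracket (a + b) y = P.bracket a y + P.bracket b y := by
  rw [map_add]; rfl

lemma bracket_smul_left (t : K) (a y : R) :
    P.bracket (t • a) y = t • P.bracket a y := by
  rw [map_smul]; rfl

lemma leibniz_right (x a b : R) :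
    P.bracket x (a * b) = a * P.bracket x b + b * P.bracket x a := by
  have h2 := P.antisymm x (a * b)
  have h1 := P.leibniz a b x
  have h4 := P.antisymm b x
  have h5 := P.antisymm a x
  linear_combination h2 - h1 - a * h4 - b * h5

lemma jacobi_right (x y r : R) :
    P.bracket x (P.bracket y r)
      = P.bracket (P.bracket r x) y + P.bracket (P.bracket x y) r := by
  have h2 := P.antisymm x (P.bracket y r)
  have hJ := P.jacobi y r x
  linear_combination h2 - hJ

/-! ### Basic facts about `sBr` -/

lemma mem_sBr {M N : Submodule K R} {x y : R} (hx : x ∈ M) (hy : y ∈ N) :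
    P.bracket x y ∈ P.sBr M N :=
  Submodule.subset_span ⟨x, hx, y, hy, rfl⟩

lemma sBr_le {M N Q : Submodule K R}
    (h : ∀ x ∈ M, ∀ y ∈ N, P.bracket x y ∈ Q) : P.sBr M N ≤ Q := by
  rw [sBr, Submodule.span_le]
  rintro z ⟨x, hx, y, hy, rfl⟩
  exact h x hx y hy

lemma sBr_mono {M M' N N' : Submodule K R} (h1 : M ≤ M') (h2 : N ≤ N') :
    P.sBr M N ≤ P.sBr M' N' :=
  P.sBr_le fun x hx y hy => P.mem_sBr (h1 hx) (h2 hy)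

lemma sBr_comm_le (M N : Submodule K R) : P.sBr M N ≤ P.sBr N M :=
  P.sBr_le fun x hx y hy => by
    rw [P.antisymm x y]; exact neg_mem (P.mem_sBr hy hx)

lemma sBr_comm (M N : Submodule K R) : P.sBr M N = P.sBr N M :=
  le_antisymm (P.sBr_comm_le M N) (P.sBr_comm_le N M)

lemma sBr_sup_le {M N Q P' : Submodule K R}
    (h1 : P.sBr M Q ≤ P') (h2 : P.sBr N Q ≤ P') : P.sBr (M ⊔ N) Q ≤ P' := by
  refine P.sBr_le fun x hx y hy => ?_
  obtain ⟨a, ha, b, hb, rfl⟩ := Submodule.mem_sup.1 hx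
  rw [P.bracket_add_left]
  exact add_mem (h1 (P.mem_sBr ha hy)) (h2 (P.mem_sBr hb hy))

lemma sBr_bot_le {Q P' : Submodule K R} : P.sBr ⊥ Q ≤ P' :=
  P.sBr_le fun x hx y _ => by
    rw [Submodule.mem_bot] at hx
    subst hx
    rw [P.bracket_zero_left]
    exact zero_mem _

lemma sBr_mul_le (M N Q : Submodule K R) :
    P.sBr (M * N) Q ≤ M * P.sBr N Q ⊔ N * P.sBr M Q := by
  refine P.sBr_le fun x hx y hy => ?_
  refine Submodule.mul_induction_on hx ?_ ?_
  · intro m hm n hn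
    rw [P.leibniz m n y]
    exact Submodule.add_mem_sup
      (Submodule.mul_mem_mul hm (P.mem_sBr hn hy))
      (Submodule.mul_mem_mul hn (P.mem_sBr hm hy))
  · intro a b hA hB
    rw [P.bracket_add_left]
    exact add_mem hA hB

lemma sBr_finsetSup_le {ι : Type*} (s : Finset ι) (f : ι → Submodule K R)
    {Q P' : Submodule K R} (h : ∀ i ∈ s, P.sBr (f i) Q ≤ P') :
    P.sBr (s.sup f) Q ≤ P' := by
  induction s using Finset.cons_induction with
  | empty => rw [Finset.sup_empty]; exact P.sBr_bot_le
  | cons a s ha ih =>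
    rw [Finset.sup_cons]
    exact P.sBr_sup_le (h a (Finset.mem_cons_self a s))
      (ih fun i hi => h i (Finset.mem_cons.2 (Or.inr hi)))

/-! ### Basic facts about `gamma` -/

lemma gamma_zero : P.gamma 0 = ⊤ := rfl
lemma gamma_one : P.gamma 1 = ⊤ := rfl

lemma gamma_succ (k : ℕ) (hk : 1 ≤ k) : P.gamma (k + 1) = P.sBr (P.gamma k) ⊤ := by
  obtain ⟨k, rfl⟩ : ∃ k', k = k' + 1 := ⟨k - 1, by omega⟩
  rfl

lemma gamma_succ_le : ∀ k, P.gamma (k + 1) ≤ P.gamma k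
  | 0 => by rw [gamma_zero]; exact le_top
  | 1 => by rw [gamma_one]; exact le_top
  | (k + 2) => sBr_mono P (gamma_succ_le (k + 1)) le_rfl

lemma gamma_mono {a b : ℕ} (h : a ≤ b) : P.gamma b ≤ P.gamma a := by
  induction b, h using Nat.le_induction with
  | base => exact le_rfl
  | succ b _ ih => exact (P.gamma_succ_le b).trans ih

lemma bracket_mem_gamma_succ {k : ℕ} (hk : 1 ≤ k) {x : R} (hx : x ∈ P.gamma k)
    (y : R) : P.bracket x y ∈ P.gamma (k + 1) := by
  rw [P.gamma_succ k hk]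
  exact P.mem_sBr hx Submodule.mem_top

lemma bracket_mem_gamma_two (x y : R) : P.bracket x y ∈ P.gamma 2 := by
  refine P.bracket_mem_gamma_succ le_rfl ?_ y
  rw [gamma_one]; exact Submodule.mem_top

/-- The key Lie-theoretic fact `{γ_i, γ_j} ⊆ γ_{i+j}`. -/
lemma sBr_gamma_gamma : ∀ j i, 1 ≤ i → P.sBr (P.gamma i) (P.gamma j) ≤ P.gamma (i + j)
  | 0 => fun i hi => by
      rw [gamma_zero, ← P.gamma_succ i hi]
      exact P.gamma_succ_le i
  | 1 => fun i hi => by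
      rw [gamma_one, ← P.gamma_succ i hi]
  | (j + 2) => fun i hi => by
      refine P.sBr_le fun x hx v hv => ?_
      have hv' : v ∈ P.sBr (P.gamma (j + 1)) ⊤ := by
        have e : j + 2 = (j + 1) + 1 := by omega
        rw [e, P.gamma_succ (j + 1) (by omega)] at hv
        exact hv
      clear hv
      rw [sBr] at hv'
      induction hv' using Submodule.span_induction with
      | mem v hv' =>
        obtain ⟨y, hy, r, -, rfl⟩ := hv'
        rw [P.jacobi_right x y r]
        refine add_mem ?_ ?_
        · have hrx : P.bracket r x ∈ P.gamma (i + 1) := by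
            rw [P.antisymm r x]
            exact neg_mem (P.bracket_mem_gamma_succ hi hx r)
          have h := sBr_gamma_gamma (j + 1) (i + 1) (by omega)
            (P.mem_sBr hrx hy)
          exact P.gamma_mono (by omega) h
        · have hxy : P.bracket x y ∈ P.gamma (i + (j + 1)) :=
            sBr_gamma_gamma (j + 1) i hi (P.mem_sBr hx hy)
          have h := P.bracket_mem_gamma_succ (k := i + (j + 1)) (by omega) hxy r
          exact P.gamma_mono (by omega) h
      | zero =>
        have : P.bracket x (0 : R) = 0 := map_zero _
        rw [this]; exact zero_mem _
      | add a b _ _ hA hB =>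
        have : P.bracket x (a + b) = P.bracket x a + P.bracket x b := map_add _ _ _
        rw [this]; exact add_mem hA hB
      | smul t a _ hA =>
        have : P.bracket x (t • a) = t • P.bracket x a := map_smul _ _ _
        rw [this]; exact Submodule.smul_mem _ _ hA

/-! ### Multiplicative helpers -/

lemma le_mul_top' (N : Submodule K R) : N ≤ N * ⊤ := fun x hx => by
  simpa using Submodule.mul_mem_mul hx (Submodule.mem_top (x := (1 : R)))

/-! ### The sum `SIG t = Σ_{a+b=t} γ_a * γ_b` -/

/-- The sum of the products `γ_a * γ_b` over `a + b = t`, `a, b ≥ 2`. -/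
def SIG (t : ℕ) : Submodule K R :=
  (Finset.Icc 2 (t - 2)).sup fun a => P.gamma a * P.gamma (t - a)

lemma le_SIG {a b t : ℕ} (ha : 2 ≤ a) (hb : 2 ≤ b) (hab : a + b = t) :
    P.gamma a * P.gamma b ≤ P.SIG t := by
  have hmem : a ∈ Finset.Icc 2 (t - 2) := by
    rw [Finset.mem_Icc]; omega
  have e : t - a = b := by omega
  have h := Finset.le_sup (f := fun a => P.gamma a * P.gamma (t - a)) hmem
  rw [SIG]
  simpa [e] using h

lemma sBr_SIG_le {t : ℕ} {Q P' : Submodule K R}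
    (h : ∀ a b, 2 ≤ a → 2 ≤ b → a + b = t →
      P.sBr (P.gamma a * P.gamma b) Q ≤ P') :
    P.sBr (P.SIG t) Q ≤ P' := by
  rw [SIG]
  refine P.sBr_finsetSup_le _ _ fun a ha => ?_
  rw [Finset.mem_Icc] at ha
  have e : a + (t - a) = t := by omega
  exact h a (t - a) (by omega) (by omega) e

/-! ### Key Lemma: `c·γ_{j+3} ⊆ γ_{j+2} + SIG (j+4)` -/

lemma mul_gamma_le (j : ℕ) (c : R) :
    ∀ v ∈ P.gamma (j + 3), c * v ∈ P.gamma (j + 2) ⊔ P.SIG (j + 4) := by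
  induction j with
  | zero =>
    intro v hv
    have hv' : v ∈ P.sBr (P.gamma 2) ⊤ := by
      rw [show (3 : ℕ) = 2 + 1 from rfl, P.gamma_succ 2 (by omega)] at hv
      exact hv
    clear hv
    rw [sBr] at hv'
    induction hv' using Submodule.span_induction with
    | mem v hv' =>
      obtain ⟨D, hD, h, -, rfl⟩ := hv'
      have key : c * P.bracket D h = -P.bracket h (c * D) + D * P.bracket h c := by
        have l1 := P.leibniz_right h c D
        have a1 := P.antisymm D h
        linear_combination c * a1 + l1
      rw [key]
      refine add_mem (Submodule.mem_sup_left (neg_mem ?_)) (Submodule.mem_sup_right ?_)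
      · exact P.bracket_mem_gamma_two h (c * D)
      · exact P.le_SIG (a := 2) (b := 2) le_rfl le_rfl rfl
          (Submodule.mul_mem_mul hD (P.bracket_mem_gamma_two h c))
    | zero => rw [mul_zero]; exact zero_mem _
    | add a b _ _ hA hB => rw [mul_add]; exact add_mem hA hB
    | smul t a _ hA => rw [mul_smul_comm]; exact Submodule.smul_mem _ _ hA
  | succ j ih =>
    intro v hv
    have hv' : v ∈ P.sBr (P.gamma (j + 3)) ⊤ := by
      have e : j + 1 + 3 = (j + 3) + 1 := by omega
      rw [e, P.gamma_succ (j + 3) (by omega)] at hv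
      exact hv
    clear hv
    rw [sBr] at hv'
    induction hv' using Submodule.span_induction with
    | mem v hv' =>
      obtain ⟨w, hw, s, -, rfl⟩ := hv'
      have key : c * P.bracket w s = P.bracket (c * w) s - w * P.bracket c s := by
        linear_combination -P.leibniz c w s
      rw [key]
      refine sub_mem ?_ ?_
      · -- `{c·w, s}` where `c·w ∈ γ_{j+2} ⊔ SIG (j+4)`
        have hcw : c * w ∈ P.gamma (j + 2) ⊔ P.SIG (j + 4) := ih w hw
        have hmem : P.bracket (c * w) s ∈
            P.sBr (P.gamma (j + 2) ⊔ P.SIG (j + 4)) ⊤ :=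
          P.mem_sBr hcw Submodule.mem_top
        have hbound : P.sBr (P.gamma (j + 2) ⊔ P.SIG (j + 4)) ⊤ ≤
            P.gamma (j + 1 + 2) ⊔ P.SIG (j + 1 + 4) := by
          refine P.sBr_sup_le ?_ ?_
          · have e : j + 1 + 2 = (j + 2) + 1 := by omega
            rw [e, P.gamma_succ (j + 2) (by omega)]
            exact le_sup_left
          · refine le_trans ?_ le_sup_right
            refine P.sBr_SIG_le fun a b ha hb hab => ?_
            refine le_trans (P.sBr_mul_le _ _ _) (sup_le ?_ ?_)
            · have e : P.sBr (P.gamma b) ⊤ = P.gamma (b + 1) :=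
                (P.gamma_succ b (by omega)).symm
              rw [e]
              exact P.le_SIG ha (by omega) (by omega)
            · have e : P.sBr (P.gamma a) ⊤ = P.gamma (a + 1) :=
                (P.gamma_succ a (by omega)).symm
              rw [e]
              exact P.le_SIG hb (by omega) (by omega)
        exact hbound hmem
      · refine Submodule.mem_sup_right ?_
        refine P.le_SIG (a := j + 3) (b := 2) (by omega) le_rfl (by omega) ?_
        exact Submodule.mul_mem_mul hw (P.bracket_mem_gamma_two c s)
    | zero => rw [mul_zero]; exact zero_mem _
    | add a b _ _ hA hB => rw [mul_add]; exact add_mem hA hB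
    | smul t a _ hA => rw [mul_smul_comm]; exact Submodule.smul_mem _ _ hA

/-! ### Main theorem -/

theorem main : ∀ n, 2 ≤ n → ∀ m, 2 ≤ m →
    P.gamma m * P.gamma n ≤ P.gamma (m + n - 2) * ⊤ := by
  intro n
  induction n using Nat.strong_induction_on with
  | _ n IH =>
    intro hn m hm
    obtain ⟨m', rfl⟩ : ∃ m', m = m' + 2 := ⟨m - 2, by omega⟩
    rcases Nat.lt_or_ge n 3 with h3 | h3
    · -- base case `n = 2`
      have hn2 : n = 2 := by omega
      subst hn2
      have e : m' + 2 + 2 - 2 = m' + 2 := by omega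
      rw [e]
      exact mul_le_mul' le_rfl le_top
    · obtain ⟨j, rfl⟩ : ∃ j, n = j + 3 := ⟨n - 3, by omega⟩
      have hw : m' + 2 + (j + 3) - 2 = m' + j + 3 := by omega
      rw [hw, Submodule.mul_le]
      intro u hu v hv
      have hu' : u ∈ P.sBr (P.gamma (m' + 1)) ⊤ := by
        have e : m' + 2 = (m' + 1) + 1 := by omega
        rw [e, P.gamma_succ (m' + 1) (by omega)] at hu
        exact hu
      clear hu
      rw [sBr] at hu'
      induction hu' using Submodule.span_induction with
      | mem u hu' =>
        obtain ⟨p, hp, c, -, rfl⟩ := hu'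
        have key : P.bracket p c * v = P.bracket p (c * v) - c * P.bracket p v := by
          linear_combination -P.leibniz_right p c v
        rw [key]
        refine sub_mem ?_ ?_
        · -- `{p, c·v}` with `c·v ∈ γ_{j+2} ⊔ SIG (j+4)`
          have hcv : c * v ∈ P.gamma (j + 2) ⊔ P.SIG (j + 4) := P.mul_gamma_le j c v hv
          have hmem : P.bracket p (c * v) ∈
              P.sBr (P.gamma (m' + 1)) (P.gamma (j + 2) ⊔ P.SIG (j + 4)) :=
            P.mem_sBr hp hcv
          have hbound : P.sBr (P.gamma (m' + 1)) (P.gamma (j + 2) ⊔ P.SIG (j + 4)) ≤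
              P.gamma (m' + j + 3) * ⊤ := by
            rw [P.sBr_comm]
            refine P.sBr_sup_le ?_ ?_
            · -- `{γ_{j+2}, γ_{m'+1}} ⊆ γ_{m'+j+3}`
              refine le_trans (P.sBr_gamma_gamma (m' + 1) (j + 2) (by omega)) ?_
              rw [show j + 2 + (m' + 1) = m' + j + 3 from by omega]
              exact le_mul_top' _
            · refine P.sBr_SIG_le fun a b ha hb hab => ?_
              refine le_trans (P.sBr_mul_le _ _ _) (sup_le ?_ ?_)
              · -- `γ_a * {γ_b, γ_{m'+1}} ⊆ γ_a * γ_{b+m'+1}`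
                refine le_trans
                  (mul_le_mul' le_rfl (P.sBr_gamma_gamma (m' + 1) b (by omega))) ?_
                rw [mul_comm]
                have h := IH a (by omega) (by omega) (b + (m' + 1)) (by omega)
                rw [show b + (m' + 1) + a - 2 = m' + j + 3 from by omega] at h
                exact h
              · refine le_trans
                  (mul_le_mul' le_rfl (P.sBr_gamma_gamma (m' + 1) a (by omega))) ?_
                rw [mul_comm]
                have h := IH b (by omega) (by omega) (a + (m' + 1)) (by omega)
                rw [show a + (m' + 1) + b - 2 = m' + j + 3 from by omega] at h
                exact h
          exact hbound hmem
        · -- `c · {p, v} ∈ ⊤ · γ_{m'+j+4} ⊆ γ_{m'+j+3} · ⊤`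
          have h1 : P.bracket p v ∈ P.gamma (m' + 1 + (j + 3)) :=
            P.sBr_gamma_gamma (j + 3) (m' + 1) (by omega) (P.mem_sBr hp hv)
          have h2 : c * P.bracket p v ∈
              (⊤ : Submodule K R) * P.gamma (m' + 1 + (j + 3)) :=
            Submodule.mul_mem_mul Submodule.mem_top h1
          have h3 : (⊤ : Submodule K R) * P.gamma (m' + 1 + (j + 3)) ≤
              P.gamma (m' + j + 3) * ⊤ := by
            rw [mul_comm (⊤ : Submodule K R)]
            exact mul_le_mul' (P.gamma_mono (by omega)) le_rfl
          exact h3 h2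
      | zero => rw [zero_mul]; exact zero_mem _
      | add a b _ _ hA hB => rw [add_mul]; exact add_mem hA hB
      | smul t a _ hA => rw [smul_mul_assoc]; exact Submodule.smul_mem _ _ hA

end PoissonStr

/-- over an arbitrary field,
`γ_m(R)·γ_n(R) ⊆ γ_{m+n-2}(R)·R` for all `m, n ≥ 2`. -/
theorem gamma_mul_gamma_le {K R : Type*} [Field K] [CommRing R] [Algebra K R]
    (P : PoissonStr K R) (m n : ℕ) (hm : 2 ≤ m) (hn : 2 ≤ n) :
    P.gamma m * P.gamma n ≤ P.gamma (m + n - 2) * ⊤ :=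
  P.main n hn m hm
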